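/- Let k ≥ 2, q ≥ 2, and n > k be integers. There exists an (n,k)_q flash code that guarantees at least t = (q−1)·⌊(n−k)/⌈log₂ k⌉⌋ writes. (The construction partitions the n cells into an index group of n−k cells, subdivided into ⌊(n−k)/⌈log₂ k⌉⌋ index blocks, and a parity group of k cells, and proceeds in q−1 phases of ⌊(n−k)/⌈log₂ k⌉⌋ writes each.) -/

import Mathlib

/-- `IsFlashCode D E` says that the pair of maps `(D, E)` forms an `(n,k)_q` flash code:
the all-zero cell-state vector decodes to the all-zero information vector, and whenever
the encoder succeeds, cell levels do not decrease, the written bit flips, and all other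
bits are unchanged. -/
structure IsFlashCode {n k q : ℕ}
    (D : (Fin n → Fin q) → (Fin k → Bool))
    (E : Fin k → (Fin n → Fin q) → Option (Fin n → Fin q)) : Prop where
  init : ∀ x : Fin n → Fin q, (∀ j, (x j : ℕ) = 0) → D x = fun _ => false
  mono : ∀ i x y, E i x = some y → ∀ j, x j ≤ y j
  flip : ∀ i x y, E i x = some y → D y i = ! D x i
  keep : ∀ i x y, E i x = some y → ∀ j, j ≠ i → D y j = D x j

/-- `CanWrite E x l` means the sequence of bit-writes `l` can be performed starting from
cell-state vector `x`, i.e. iteratively applying the encoder never produces `none`. -/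
def CanWrite {n k q : ℕ} (E : Fin k → (Fin n → Fin q) → Option (Fin n → Fin q)) :
    (Fin n → Fin q) → List (Fin k) → Prop
  | _, [] => True
  | x, i :: l => ∃ y, E i x = some y ∧ CanWrite E y l

/-- The code guarantees `t` writes: every sequence of at most `t` bit-writes, starting from
the all-zero cell-state vector, is accommodated without a block erasure. -/
def Guarantees {n k q : ℕ} (E : Fin k → (Fin n → Fin q) → Option (Fin n → Fin q))
    (t : ℕ) : Prop :=
  ∀ x : Fin n → Fin q, (∀ j, (x j : ℕ) = 0) →
    ∀ l : List (Fin k), l.length ≤ t → CanWrite E x l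

/-!
Bit `i` is stored as the parity of a counter: the level of its parity cell plus the levels of
the index blocks it owns. A block of `c = ⌈log₂ k⌉` cells whose nonzero cells sit at the binary
digits `1` of `i ≠ 0` belongs to bit `i`; since `0` has no such digits, bit `0` fills blocks
from the right end, and its blocks are recognised by the empty block separating them from those
filled from the left. A write of bit `i` raises its parity cell, else its unique non-full block,
else claims a fresh block, and raises the potential (parity levels plus block levels) by one.
A write is impossible only if bit `i` and the owner of every non-full block have full parity
cells and at most one block is empty; counting these full parity cells shows that the potential
is then at least `q - 1` times the number of blocks.
-/

open Finset Function

section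

variable {n k q : ℕ}

def IsWrite (D : (Fin n → Fin q) → Fin k → Bool) (i : Fin k) (x y : Fin n → Fin q) : Prop :=
  (∀ j, x j ≤ y j) ∧ D y i = !D x i ∧ ∀ j, j ≠ i → D y j = D x j

theorem exists_isFlashCode_guarantees_of_potential (D : (Fin n → Fin q) → Fin k → Bool)
    (inv : (Fin n → Fin q) → Prop) (pot : (Fin n → Fin q) → ℕ) (t : ℕ)
    (hzero : ∀ x : Fin n → Fin q, (∀ j, (x j : ℕ) = 0) →
      D x = (fun _ => false) ∧ inv x ∧ pot x = 0)
    (hstep : ∀ x, inv x → pot x < t → ∀ i, ∃ y, IsWrite D i x y ∧ inv y ∧ pot y ≤ pot x + 1) :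
    ∃ E, IsFlashCode D E ∧ Guarantees E t := by
  classical
  let Admissible i x y := IsWrite D i x y ∧ (inv x → pot x < t → inv y ∧ pot y ≤ pot x + 1)
  let E i x := if h : ∃ y, Admissible i x y then some h.choose else none
  have isWrite_of_eq_some {i x y} (h : E i x = some y) : IsWrite D i x y := by
    simp only [E] at h
    split_ifs at h with hex
    exact Option.some_inj.mp h ▸ hex.choose_spec.1
  have canWrite (l : List (Fin k)) : ∀ x, inv x → pot x + l.length ≤ t → CanWrite E x l := by
    induction l with
    | nil => exact fun _ _ _ => trivial
    | cons i l ih =>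
      intro x hx hlen
      rw [List.length_cons] at hlen
      have hex : ∃ y, Admissible i x y := by
        obtain ⟨y, hw, hy, hp⟩ := hstep x hx (by omega) i
        exact ⟨y, hw, fun _ _ => ⟨hy, hp⟩⟩
      obtain ⟨hy, hp⟩ := hex.choose_spec.2 hx (by omega)
      exact ⟨hex.choose, dif_pos hex, ih _ hy (by omega)⟩
  refine ⟨E, ⟨fun x hx => (hzero x hx).1, fun i x y h => (isWrite_of_eq_some h).1,
    fun i x y h => (isWrite_of_eq_some h).2.1, fun i x y h => (isWrite_of_eq_some h).2.2⟩, ?_⟩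
  intro x hx l hl
  obtain ⟨-, hinv, hpot⟩ := hzero x hx
  exact canWrite l x hinv (by omega)

end

namespace FlashCode

variable {n k q : ℕ}

def level (x : Fin n → Fin q) (a : ℕ) : ℕ := if h : a < n then x ⟨a, h⟩ else 0

def blockLevel (c : ℕ) (x : Fin n → Fin q) (b j : ℕ) : ℕ := level x (b * c + j)

def parityLevel (c B : ℕ) (x : Fin n → Fin q) (i : ℕ) : ℕ := level x (B * c + i)

theorem exists_le_with_levels {c B : ℕ} (hc : 0 < c) (hn : B * c + k ≤ n) (x : Fin n → Fin q)
    (p : ℕ → ℕ) (f : ℕ → ℕ → ℕ) (hp : ∀ i < k, parityLevel c B x i ≤ p i ∧ p i < q)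
    (hf : ∀ b < B, ∀ j < c, blockLevel c x b j ≤ f b j ∧ f b j < q) :
    ∃ y : Fin n → Fin q, (∀ a, x a ≤ y a) ∧ (∀ i < k, parityLevel c B y i = p i) ∧
      ∀ b < B, ∀ j < c, blockLevel c y b j = f b j := by
  have hdiv {a : ℕ} (ha : a < B * c) : a / c < B := Nat.div_lt_of_lt_mul (by rwa [mul_comm])
  let y (a : Fin n) : Fin q :=
    if h : B * c ≤ a ∧ a - B * c < k then ⟨p (a - B * c), (hp _ h.2).2⟩
    else if h' : (a : ℕ) < B * c then ⟨f (a / c) (a % c), (hf _ (hdiv h') _ (Nat.mod_lt _ hc)).2⟩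
    else x a
  refine ⟨y, fun a => Fin.le_iff_val_le_val.mpr ?_, fun i hi => ?_, fun b hb j hj => ?_⟩
  · simp only [y]
    split_ifs with h h'
    · simpa only [parityLevel, level, Nat.add_sub_cancel' h.1, dif_pos a.isLt] using (hp _ h.2).1
    · simpa only [blockLevel, level, Nat.div_add_mod', dif_pos a.isLt]
        using (hf _ (hdiv h') (a % c) (Nat.mod_lt _ hc)).1
    · exact le_rfl
  · simp [parityLevel, level, y, show B * c + i < n by omega, hi]
  · have hlt : b * c + j < B * c := by nlinarith
    have hb' : (b * c + j) / c = b := by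
      rw [add_comm, Nat.add_mul_div_right _ _ hc, Nat.div_eq_of_lt hj, zero_add]
    simp [blockLevel, level, y, show b * c + j < n by omega, hlt, Nat.not_le.mpr hlt, hb',
      Nat.mod_eq_of_lt hj]

section Reading

variable (c : ℕ)

def blockMax (f : ℕ → ℕ → ℕ) (b : ℕ) : ℕ := (range c).sup (f b)

def pattern (f : ℕ → ℕ → ℕ) (b : ℕ) : ℕ := ∑ j ∈ (range c).filter (0 < f b ·), 2 ^ j

/-- Bit `0` has no nonempty pattern, so the blocks after an empty block are read as its own. -/
def readOwner (f : ℕ → ℕ → ℕ) (b : ℕ) : ℕ :=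
  if ∀ b' < b, blockMax c f b' ≠ 0 then pattern c f b else 0

def readCount (B : ℕ) (p : ℕ → ℕ) (f : ℕ → ℕ → ℕ) (i : ℕ) : ℕ :=
  p i + ∑ b ∈ range B, if readOwner c f b = i then blockMax c f b else 0

end Reading

def decode (c B : ℕ) (x : Fin n → Fin q) (i : Fin k) : Bool :=
  (readCount c B (parityLevel c B x) (blockLevel c x) i).bodd

def potential (k c B : ℕ) (x : Fin n → Fin q) : ℕ :=
  ∑ i ∈ range k, parityLevel c B x i + ∑ b ∈ range B, blockMax c (blockLevel c x) b

/-- Blocks of bit `0` are recognised by their position, so any nonempty shape serves for them. -/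
def shape (o : ℕ) : Finset ℕ := if o = 0 then {0} else o.bitIndices.toFinset

lemma shape_subset_range {c o : ℕ} (hc : 0 < c) (ho : o < 2 ^ c) : shape o ⊆ range c := by
  intro j hj
  unfold shape at hj
  split_ifs at hj
  · simpa [mem_singleton.mp hj]
  · have := Nat.two_pow_le_of_mem_bitIndices (List.mem_toFinset.mp hj)
    exact mem_range.mpr ((Nat.pow_lt_pow_iff_right (a := 2) (by norm_num)).mp (by omega))

lemma sum_shape {o : ℕ} (ho : o ≠ 0) : ∑ j ∈ shape o, 2 ^ j = o := by
  simp [shape, ho]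

lemma shape_nonempty (o : ℕ) : (shape o).Nonempty := by
  by_cases ho : o = 0
  · simp [shape, ho]
  · rw [nonempty_iff_ne_empty]
    intro h
    exact ho (by simpa [h] using (sum_shape ho).symm)

structure Config where
  par : ℕ → ℕ
  left : ℕ
  right : ℕ
  owner : ℕ → ℕ
  lvl : ℕ → ℕ

namespace Config

variable (C : Config)

def cell (b j : ℕ) : ℕ := if j ∈ shape (C.owner b) then C.lvl b else 0

def count (B i : ℕ) : ℕ := C.par i + ∑ b ∈ range B, if C.owner b = i then C.lvl b else 0

def pot (k B : ℕ) : ℕ := ∑ i ∈ range k, C.par i + ∑ b ∈ range B, C.lvl b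

/-- Blocks `[0, left)` belong to nonzero bits, `[left, right)` are empty and `[right, B)` belong
to bit `0`; a bit owns blocks only once its parity cell is full, and at most one of them is not
full. -/
structure Valid (k q B : ℕ) : Prop where
  left_le_right : C.left ≤ C.right
  right_le : C.right ≤ B
  left_lt_right : C.right < B → C.left < C.right
  par_le : ∀ i < k, C.par i ≤ q - 1
  lvl_le : ∀ b, C.lvl b ≤ q - 1
  lvl_eq_zero : ∀ b < B, C.lvl b = 0 ↔ C.left ≤ b ∧ b < C.right
  owner_pos : ∀ b < C.left, 0 < C.owner b
  owner_right : ∀ b, C.right ≤ b → C.owner b = 0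
  owner_lt : ∀ b < B, 0 < C.lvl b → C.owner b < k
  par_owner : ∀ b < B, 0 < C.lvl b → C.par (C.owner b) = q - 1
  full_of_owner_eq : ∀ b < B, ∀ b' < B, b ≠ b' → 0 < C.lvl b → 0 < C.lvl b' →
    C.owner b = C.owner b' → C.lvl b = q - 1 ∨ C.lvl b' = q - 1

section Reading

variable {C} {k q B c : ℕ} {f : ℕ → ℕ → ℕ}

lemma shape_owner_subset (hC : C.Valid k q B) (hc : 0 < c) (hkc : k ≤ 2 ^ c) {b : ℕ} (hb : b < B)
    (hlvl : 0 < C.lvl b) :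
    shape (C.owner b) ⊆ range c :=
  shape_subset_range hc (by have := hC.owner_lt b hb hlvl; omega)

lemma blockMax_eq (hC : C.Valid k q B) (hc : 0 < c) (hkc : k ≤ 2 ^ c)
    (hf : ∀ b < B, ∀ j < c, f b j = C.cell b j) {b : ℕ} (hb : b < B) :
    blockMax c f b = C.lvl b := by
  apply le_antisymm
  · refine Finset.sup_le fun j hj => ?_
    rw [hf b hb j (mem_range.mp hj), cell]
    split_ifs <;> omega
  · rcases Nat.eq_zero_or_pos (C.lvl b) with h | h
    · omega
    · obtain ⟨j, hj⟩ := shape_nonempty (C.owner b)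
      have hjc := shape_owner_subset hC hc hkc hb h hj
      calc C.lvl b = f b j := by rw [hf b hb j (mem_range.mp hjc), cell, if_pos hj]
        _ ≤ blockMax c f b := le_sup (f := f b) hjc

lemma pattern_eq (hC : C.Valid k q B) (hc : 0 < c) (hkc : k ≤ 2 ^ c)
    (hf : ∀ b < B, ∀ j < c, f b j = C.cell b j) {b : ℕ} (hb : b < B) (hlvl : 0 < C.lvl b)
    (hown : C.owner b ≠ 0) :
    pattern c f b = C.owner b := by
  have hfilter : (range c).filter (0 < f b ·) = shape (C.owner b) := by
    ext j
    simp only [mem_filter, mem_range]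
    constructor
    · rintro ⟨hj, hpos⟩
      rw [hf b hb j hj, cell] at hpos
      split_ifs at hpos with h
      · exact h
      · omega
    · intro hj
      have hjc := mem_range.mp (shape_owner_subset hC hc hkc hb hlvl hj)
      exact ⟨hjc, by rwa [hf b hb j hjc, cell, if_pos hj]⟩
  rw [pattern, hfilter, sum_shape hown]

lemma readOwner_eq (hC : C.Valid k q B) (hc : 0 < c) (hkc : k ≤ 2 ^ c)
    (hf : ∀ b < B, ∀ j < c, f b j = C.cell b j) {b : ℕ} (hb : b < B) (hlvl : 0 < C.lvl b) :
    readOwner c f b = C.owner b := by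
  have hzero := hC.lvl_eq_zero
  by_cases hleft : b < C.left
  · have hprefix : ∀ b' < b, blockMax c f b' ≠ 0 := fun b' hb' => by
      rw [blockMax_eq hC hc hkc hf (by omega)]
      have := hzero b' (by omega)
      omega
    rw [readOwner, if_pos hprefix,
      pattern_eq hC hc hkc hf hb hlvl (hC.owner_pos b hleft).ne']
  · have hright : C.right ≤ b := by have := hzero b hb; omega
    have hlr := hC.left_lt_right (by omega)
    have hgap : ¬ ∀ b' < b, blockMax c f b' ≠ 0 := fun h =>
      h C.left (by omega) (by rw [blockMax_eq hC hc hkc hf (by omega), hzero _ (by omega)]; omega)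
    rw [readOwner, if_neg hgap, hC.owner_right b hright]

lemma readCount_eq (hC : C.Valid k q B) (hc : 0 < c) (hkc : k ≤ 2 ^ c)
    (hf : ∀ b < B, ∀ j < c, f b j = C.cell b j) {p : ℕ → ℕ} {i : ℕ} (hp : p i = C.par i) :
    readCount c B p f i = C.count B i := by
  rw [readCount, Config.count, hp]
  congr 1
  refine sum_congr rfl fun b hb => ?_
  have hb := mem_range.mp hb
  rw [blockMax_eq hC hc hkc hf hb]
  rcases Nat.eq_zero_or_pos (C.lvl b) with h | h
  · simp [h]
  · rw [readOwner_eq hC hc hkc hf hb h]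

end Reading

end Config

lemma sum_eq_sum_add_of_eq_of_ne {s : Finset ℕ} {g g' : ℕ → ℕ} {b₀ d : ℕ} (h : b₀ ∈ s)
    (heq : g' b₀ = g b₀ + d) (hne : ∀ b ≠ b₀, g' b = g b) : ∑ b ∈ s, g' b = ∑ b ∈ s, g b + d := by
  rw [← add_sum_erase s g' h, ← add_sum_erase s g h, heq,
    sum_congr rfl fun b hb => hne b (ne_of_mem_erase hb)]
  ring

namespace Config

variable {C : Config} {k q B : ℕ}

def bumpPar (C : Config) (i : ℕ) : Config := { C with par := update C.par i (C.par i + 1) }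

def raise (C : Config) (b₀ i left right : ℕ) : Config :=
  ⟨C.par, left, right, update C.owner b₀ i, update C.lvl b₀ (C.lvl b₀ + 1)⟩

structure Step (k q B i : ℕ) (C C' : Config) : Prop where
  valid : C'.Valid k q B
  pot_eq : C'.pot k B = C.pot k B + 1
  par_le : ∀ j, C.par j ≤ C'.par j
  cell_le : ∀ b j, C.cell b j ≤ C'.cell b j
  count_eq : ∀ j, C'.count B j = C.count B j + if j = i then 1 else 0

lemma step_bumpPar (hC : C.Valid k q B) {i : ℕ} (hi : i < k) (hpar : C.par i < q - 1) :
    Step k q B i C (C.bumpPar i) where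
  valid :=
    { hC with
      par_le := fun j hj => by
        rcases eq_or_ne j i with rfl | h
        · simp [bumpPar]; omega
        · simpa [bumpPar, h] using hC.par_le j hj
      par_owner := fun b hb hlvl => by
        have := hC.par_owner b hb hlvl
        have : C.owner b ≠ i := by rintro h; rw [h] at this; omega
        simpa [bumpPar, this] using hC.par_owner b hb hlvl }
  pot_eq := by
    rw [pot, pot, sum_eq_sum_add_of_eq_of_ne (g := C.par) (d := 1) (mem_range.mpr hi)
      (by simp [bumpPar]) fun j h => by simp [bumpPar, h]]
    simp only [bumpPar]
    ring
  par_le j := by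
    rcases eq_or_ne j i with rfl | h <;> simp [bumpPar, *]
  cell_le _ _ := le_rfl
  count_eq j := by
    simp only [count, bumpPar]
    rcases eq_or_ne j i with rfl | h
    · rw [update_self, if_pos rfl, add_right_comm]
      rfl
    · rw [update_of_ne h, if_neg h, add_zero]
      rfl

lemma step_raise {b₀ i left right : ℕ} (hb₀ : b₀ < B) (hown : C.lvl b₀ = 0 ∨ C.owner b₀ = i)
    (hvalid : (C.raise b₀ i left right).Valid k q B) :
    Step k q B i C (C.raise b₀ i left right) where
  valid := hvalid
  pot_eq := by
    rw [pot, pot, sum_eq_sum_add_of_eq_of_ne (g := C.lvl) (d := 1) (mem_range.mpr hb₀)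
      (by simp [raise]) fun b h => by simp [raise, h]]
    simp only [raise]
    ring
  par_le _ := le_rfl
  cell_le b j := by
    rcases eq_or_ne b b₀ with rfl | h
    · rcases hown with h0 | h0 <;> simp [cell, raise, h0]
      split_ifs <;> omega
    · simp [cell, raise, h]
  count_eq j := by
    rw [count, count, add_assoc]
    congr 1
    refine sum_eq_sum_add_of_eq_of_ne (mem_range.mpr hb₀) ?_ fun b h => by simp [raise, h]
    rcases hown with h0 | h0 <;> simp [raise, h0] <;> split_ifs <;> omega

lemma valid_raise_bump (hC : C.Valid k q B) {b₀ : ℕ} (hb₀ : b₀ < B) (hlvl : 0 < C.lvl b₀)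
    (hopen : C.lvl b₀ < q - 1) : (C.raise b₀ (C.owner b₀) C.left C.right).Valid k q B where
  left_le_right := hC.left_le_right
  right_le := hC.right_le
  left_lt_right := hC.left_lt_right
  par_le := hC.par_le
  lvl_le b := by
    rcases eq_or_ne b b₀ with rfl | h
    · simp [raise]; omega
    · simpa [raise, h] using hC.lvl_le b
  lvl_eq_zero b hb := by
    rcases eq_or_ne b b₀ with rfl | h
    · simpa [raise] using (hC.lvl_eq_zero b hb).not.mp hlvl.ne'
    · simpa [raise, h] using hC.lvl_eq_zero b hb
  owner_pos := by simpa [raise] using hC.owner_pos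
  owner_right := by simpa [raise] using hC.owner_right
  owner_lt b hb := by
    rcases eq_or_ne b b₀ with rfl | h
    · simpa [raise] using hC.owner_lt b hb hlvl
    · simpa [raise, h] using hC.owner_lt b hb
  par_owner b hb := by
    rcases eq_or_ne b b₀ with rfl | h
    · simpa [raise] using hC.par_owner b hb hlvl
    · simpa [raise, h] using hC.par_owner b hb
  full_of_owner_eq b hb b' hb' hne := by
    have key := hC.full_of_owner_eq b hb b' hb' hne
    rcases eq_or_ne b b₀ with rfl | h
    · simp only [raise, update_self, update_of_ne hne.symm, update_eq_self]
      intro _ hlvl' hown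
      have := key hlvl hlvl' hown
      omega
    rcases eq_or_ne b' b₀ with rfl | h'
    · simp only [raise, update_self, update_of_ne hne, update_eq_self]
      intro hlvl'' _ hown
      have := key hlvl'' hlvl hown
      omega
    · simpa [raise, h, h'] using key

lemma raise_full_of_owner_eq (hC : C.Valid k q B) {b₀ i left right : ℕ}
    (hempty : C.lvl b₀ = 0) (hfull : ∀ b < B, 0 < C.lvl b → C.owner b = i → C.lvl b = q - 1)
    {b b' : ℕ} (hb : b < B) (hb' : b' < B) (hne : b ≠ b') :
    let C' := C.raise b₀ i left right
    0 < C'.lvl b → 0 < C'.lvl b' → C'.owner b = C'.owner b' →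
      C'.lvl b = q - 1 ∨ C'.lvl b' = q - 1 := by
  intro C'
  have key := hC.full_of_owner_eq b hb b' hb' hne
  rcases eq_or_ne b b₀ with rfl | h
  · simp only [C', raise, update_self, update_of_ne hne.symm, hempty]
    intro _ hlvl' hown
    exact .inr (hfull b' hb' hlvl' hown.symm)
  rcases eq_or_ne b' b₀ with rfl | h'
  · simp only [C', raise, update_self, update_of_ne hne, hempty]
    intro hlvl _ hown
    exact .inl (hfull b hb hlvl hown)
  · simpa [C', raise, h, h'] using key

lemma valid_raise_claimLeft (hC : C.Valid k q B) {i : ℕ} (hi : 0 < i) (hik : i < k) (hq : 2 ≤ q)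
    (hgap : C.left + 2 ≤ C.right) (hpar : C.par i = q - 1)
    (hfull : ∀ b < B, 0 < C.lvl b → C.owner b = i → C.lvl b = q - 1) :
    (C.raise C.left i (C.left + 1) C.right).Valid k q B := by
  have hright := hC.right_le
  have hempty : C.lvl C.left = 0 := (hC.lvl_eq_zero _ (by omega)).mpr ⟨le_rfl, by omega⟩
  exact {
    left_le_right := by simp [raise]; omega
    right_le := hright
    left_lt_right := fun _ => by simp [raise]; omega
    par_le := hC.par_le
    lvl_le := fun b => by
      rcases eq_or_ne b C.left with rfl | h
      · simp [raise, hempty]; omega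
      · simpa [raise, h] using hC.lvl_le b
    lvl_eq_zero := fun b hb => by
      rcases eq_or_ne b C.left with rfl | h
      · simp [raise]
      · simp only [raise, update_of_ne h, hC.lvl_eq_zero b hb]
        omega
    owner_pos := fun b hb => by
      rcases eq_or_ne b C.left with rfl | h
      · simpa [raise] using hi
      · simpa [raise, h] using hC.owner_pos b (by simp [raise] at hb; omega)
    owner_right := fun b hb => by
      simpa [raise, show b ≠ C.left by simp [raise] at hb; omega] using hC.owner_right b hb
    owner_lt := fun b hb => by
      rcases eq_or_ne b C.left with rfl | h
      · simpa [raise] using hik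
      · simpa [raise, h] using hC.owner_lt b hb
    par_owner := fun b hb => by
      rcases eq_or_ne b C.left with rfl | h
      · simpa [raise] using hpar
      · simpa [raise, h] using hC.par_owner b hb
    full_of_owner_eq := fun b hb b' hb' hne =>
      raise_full_of_owner_eq hC hempty hfull hb hb' hne }

lemma valid_raise_claimRight (hC : C.Valid k q B) (hk : 0 < k) (hq : 2 ≤ q)
    (hgap : C.left + 2 ≤ C.right) (hpar : C.par 0 = q - 1)
    (hfull : ∀ b < B, 0 < C.lvl b → C.owner b = 0 → C.lvl b = q - 1) :
    (C.raise (C.right - 1) 0 C.left (C.right - 1)).Valid k q B := by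
  have hright := hC.right_le
  have hempty : C.lvl (C.right - 1) = 0 := (hC.lvl_eq_zero _ (by omega)).mpr ⟨by omega, by omega⟩
  exact {
    left_le_right := by simp [raise]; omega
    right_le := by simp [raise]; omega
    left_lt_right := fun _ => by simp [raise]; omega
    par_le := hC.par_le
    lvl_le := fun b => by
      rcases eq_or_ne b (C.right - 1) with rfl | h
      · simp [raise, hempty]; omega
      · simpa [raise, h] using hC.lvl_le b
    lvl_eq_zero := fun b hb => by
      rcases eq_or_ne b (C.right - 1) with rfl | h
      · simp [raise]
      · simp only [raise, update_of_ne h, hC.lvl_eq_zero b hb]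
        omega
    owner_pos := fun b hb => by
      simpa [raise, show b ≠ C.right - 1 by simp [raise] at hb; omega] using hC.owner_pos b hb
    owner_right := fun b hb => by
      rcases eq_or_ne b (C.right - 1) with rfl | h
      · simp [raise]
      · simpa [raise, h] using hC.owner_right b (by simp [raise] at hb; omega)
    owner_lt := fun b hb => by
      rcases eq_or_ne b (C.right - 1) with rfl | h
      · simpa [raise] using hk
      · simpa [raise, h] using hC.owner_lt b hb
    par_owner := fun b hb => by
      rcases eq_or_ne b (C.right - 1) with rfl | h
      · simpa [raise] using hpar
      · simpa [raise, h] using hC.par_owner b hb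
    full_of_owner_eq := fun b hb b' hb' hne =>
      raise_full_of_owner_eq hC hempty hfull hb hb' hne }

section Accounting

variable (C) (B q : ℕ)

def used : Finset ℕ := (range B).filter (0 < C.lvl ·)

def openBlocks : Finset ℕ := (C.used B).filter (C.lvl · < q - 1)

variable {C B q}

lemma mul_card_used_le :
    (q - 1) * (C.used B).card ≤ ∑ b ∈ range B, C.lvl b + (q - 1) * (C.openBlocks B q).card := by
  calc (q - 1) * (C.used B).card = ∑ b ∈ C.used B, (q - 1) := by
        rw [sum_const, smul_eq_mul, mul_comm]
    _ ≤ ∑ b ∈ C.used B, (C.lvl b + if C.lvl b < q - 1 then q - 1 else 0) :=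
        sum_le_sum fun b _ => by split_ifs <;> omega
    _ = ∑ b ∈ C.used B, C.lvl b + (q - 1) * (C.openBlocks B q).card := by
        rw [sum_add_distrib, ← sum_filter, sum_const, smul_eq_mul, mul_comm, openBlocks]
    _ ≤ _ := by gcongr; exact filter_subset _ _

lemma mul_card_openBlocks_le (hC : C.Valid k q B) {i : ℕ} (hik : i < k) (hpar : C.par i = q - 1)
    (hfull : ∀ b < B, 0 < C.lvl b → C.owner b = i → C.lvl b = q - 1) :
    (q - 1) * ((C.openBlocks B q).card + 1) ≤ ∑ j ∈ range k, C.par j := by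
  have hmem {b} (hb : b ∈ C.openBlocks B q) : b < B ∧ 0 < C.lvl b ∧ C.lvl b < q - 1 := by
    simp only [openBlocks, used, mem_filter, mem_range] at hb
    exact ⟨hb.1.1, hb.1.2, hb.2⟩
  have hinj : Set.InjOn C.owner (C.openBlocks B q) := fun b hb b' hb' hown => by
    by_contra hne
    have := hC.full_of_owner_eq b (hmem hb).1 b' (hmem hb').1 hne (hmem hb).2.1 (hmem hb').2.1 hown
    have := hmem hb; have := hmem hb'
    omega
  have hi : i ∉ (C.openBlocks B q).image C.owner := by
    simp only [mem_image, not_exists, not_and]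
    intro b hb hown
    have := hfull b (hmem hb).1 (hmem hb).2.1 hown
    have := hmem hb
    omega
  set T := insert i ((C.openBlocks B q).image C.owner)
  have hT : T ⊆ range k := insert_subset (mem_range.mpr hik) fun j hj => by
    obtain ⟨b, hb, rfl⟩ := mem_image.mp hj
    exact mem_range.mpr (hC.owner_lt b (hmem hb).1 (hmem hb).2.1)
  calc (q - 1) * ((C.openBlocks B q).card + 1) = ∑ j ∈ T, C.par j := by
        rw [sum_congr rfl fun j hj => ?_, sum_const, smul_eq_mul, card_insert_of_notMem hi,
          card_image_of_injOn hinj, mul_comm]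
        rcases mem_insert.mp hj with rfl | hj
        · exact hpar
        · obtain ⟨b, hb, rfl⟩ := mem_image.mp hj
          exact hC.par_owner b (hmem hb).1 (hmem hb).2.1
    _ ≤ ∑ j ∈ range k, C.par j := sum_le_sum_of_subset hT

lemma le_pot_of_stuck (hC : C.Valid k q B) {i : ℕ} (hik : i < k) (hpar : C.par i = q - 1)
    (hfull : ∀ b < B, 0 < C.lvl b → C.owner b = i → C.lvl b = q - 1)
    (hgap : C.right ≤ C.left + 1) : (q - 1) * B ≤ C.pot k B := by
  have hcover : range B ⊆ insert C.left (C.used B) := fun b hb => by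
    have hb := mem_range.mp hb
    have := hC.lvl_eq_zero b hb
    by_cases h : C.lvl b = 0
    · exact mem_insert.mpr (.inl (by omega))
    · exact mem_insert_of_mem (mem_filter.mpr ⟨mem_range.mpr hb, by omega⟩)
  have hB : B ≤ (C.used B).card + 1 := by
    simpa using (card_le_card hcover).trans (card_insert_le _ _)
  have h1 := mul_card_used_le (C := C) (B := B) (q := q)
  have h2 := mul_card_openBlocks_le hC hik hpar hfull
  rw [pot]
  nlinarith

end Accounting

lemma exists_step (hC : C.Valid k q B) (hpot : C.pot k B < (q - 1) * B) {i : ℕ} (hik : i < k) :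
    ∃ C', Step k q B i C C' := by
  have hq : 2 ≤ q := by
    by_contra h
    simp [show q - 1 = 0 by omega] at hpot
  by_cases hpar : C.par i < q - 1
  · exact ⟨_, step_bumpPar hC hik hpar⟩
  replace hpar : C.par i = q - 1 := le_antisymm (hC.par_le i hik) (not_lt.mp hpar)
  by_cases hopen : ∃ b < B, 0 < C.lvl b ∧ C.owner b = i ∧ C.lvl b < q - 1
  · obtain ⟨b, hb, hlvl, rfl, hlt⟩ := hopen
    exact ⟨_, step_raise hb (.inr rfl) (valid_raise_bump hC hb hlvl hlt)⟩
  have hfull : ∀ b < B, 0 < C.lvl b → C.owner b = i → C.lvl b = q - 1 := fun b hb hlvl hown => by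
    have := hC.lvl_le b
    by_contra h
    exact hopen ⟨b, hb, hlvl, hown, by omega⟩
  have hgap : C.left + 2 ≤ C.right := by
    by_contra h
    have := le_pot_of_stuck hC hik hpar hfull (by omega)
    omega
  have hright := hC.right_le
  rcases Nat.eq_zero_or_pos i with rfl | hi
  · have hempty := (hC.lvl_eq_zero (C.right - 1) (by omega)).mpr ⟨by omega, by omega⟩
    exact ⟨_, step_raise (by omega) (.inl hempty)
      (valid_raise_claimRight hC hik hq hgap hpar hfull)⟩
  · have hempty := (hC.lvl_eq_zero C.left (by omega)).mpr ⟨le_rfl, by omega⟩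
    exact ⟨_, step_raise (by omega) (.inl hempty)
      (valid_raise_claimLeft hC hi hik hq hgap hpar hfull)⟩

end Config

abbrev Config.empty (B : ℕ) : Config := ⟨fun _ => 0, 0, B, fun _ => 0, fun _ => 0⟩

lemma Config.valid_empty {k q B : ℕ} : (Config.empty B).Valid k q B := by
  constructor <;> simp

def Realizes (k c B : ℕ) (x : Fin n → Fin q) (C : Config) : Prop :=
  (∀ i < k, parityLevel c B x i = C.par i) ∧ ∀ b < B, ∀ j < c, blockLevel c x b j = C.cell b j

section Realizes

variable {c B : ℕ} {C : Config} {x : Fin n → Fin q}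

lemma realizes_empty (c B : ℕ) (hx : ∀ j, (x j : ℕ) = 0) : Realizes k c B x (Config.empty B) := by
  have hlevel (a : ℕ) : level x a = 0 := by
    unfold level
    split_ifs <;> simp [hx]
  exact ⟨fun i _ => hlevel _, fun b _ j _ => by simp [blockLevel, hlevel, Config.cell]⟩

lemma decode_eq (hC : C.Valid k q B) (hc : 0 < c) (hkc : k ≤ 2 ^ c) (hx : Realizes k c B x C)
    (i : Fin k) : decode c B x i = (C.count B i).bodd := by
  rw [decode, Config.readCount_eq hC hc hkc hx.2 (hx.1 i i.isLt)]

lemma potential_eq (hC : C.Valid k q B) (hc : 0 < c) (hkc : k ≤ 2 ^ c) (hx : Realizes k c B x C) :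
    potential k c B x = C.pot k B := by
  rw [potential, Config.pot, sum_congr rfl fun i hi => hx.1 i (mem_range.mp hi),
    sum_congr rfl fun b hb => Config.blockMax_eq hC hc hkc hx.2 (mem_range.mp hb)]

lemma exists_realizes_of_step (hc : 0 < c) (hn : B * c + k ≤ n) (hx : Realizes k c B x C)
    {i : ℕ} (hik : i < k) {C' : Config} (hstep : C.Step k q B i C') :
    ∃ y, (∀ a, x a ≤ y a) ∧ Realizes k c B y C' := by
  have hq : 0 < q := (x ⟨0, by omega⟩).pos
  have hC' := hstep.valid
  have hcell (b j : ℕ) : C'.cell b j ≤ q - 1 := by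
    have := hC'.lvl_le b
    unfold Config.cell
    split_ifs <;> omega
  exact exists_le_with_levels hc hn x C'.par C'.cell
    (fun j hj => ⟨(hx.1 j hj).trans_le (hstep.par_le j), by have := hC'.par_le j hj; omega⟩)
    (fun b hb j hj => ⟨(hx.2 b hb j hj).trans_le (hstep.cell_le b j), by have := hcell b j; omega⟩)

lemma isWrite_decode_of_step (hC : C.Valid k q B) (hc : 0 < c) (hkc : k ≤ 2 ^ c) {C' : Config}
    {i : Fin k} (hstep : C.Step k q B i C') {y : Fin n → Fin q}
    (hx : Realizes k c B x C) (hy : Realizes k c B y C') (hxy : ∀ a, x a ≤ y a) :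
    IsWrite (decode c B) i x y := by
  have hdec (j : Fin k) : decode c B y j = ((C.count B j).bodd ^^ decide (j = i)) := by
    rw [decode_eq hstep.valid hc hkc hy, hstep.count_eq]
    by_cases h : j = i
    · simp [h, Nat.bodd_succ]
    · simp [h, Fin.val_ne_of_ne h]
  refine ⟨hxy, ?_, fun j hj => ?_⟩
  · rw [hdec, decode_eq hC hc hkc hx]
    simp
  · rw [hdec, decode_eq hC hc hkc hx]
    simp [hj]

end Realizes

theorem exists_isFlashCode_guarantees {c B : ℕ} (hc : 0 < c) (hkc : k ≤ 2 ^ c)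
    (hn : B * c + k ≤ n) :
    ∃ E : Fin k → (Fin n → Fin q) → Option (Fin n → Fin q),
      IsFlashCode (decode c B) E ∧ Guarantees E ((q - 1) * B) := by
  refine exists_isFlashCode_guarantees_of_potential _
    (fun x => ∃ C : Config, C.Valid k q B ∧ Realizes k c B x C) (potential k c B) _
    (fun x hx => ?_) fun x ⟨C, hC, hx⟩ hpot i => ?_
  · have hx₀ := realizes_empty (k := k) c B hx
    refine ⟨funext fun i => ?_, ⟨_, Config.valid_empty, hx₀⟩, ?_⟩
    · rw [decode_eq Config.valid_empty hc hkc hx₀]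
      simp [Config.count]
    · rw [potential_eq Config.valid_empty hc hkc hx₀]
      simp [Config.pot]
  · rw [potential_eq hC hc hkc hx] at hpot
    obtain ⟨C', hstep⟩ := C.exists_step hC hpot i.isLt
    obtain ⟨y, hxy, hy⟩ := exists_realizes_of_step hc hn hx i.isLt hstep
    refine ⟨y, isWrite_decode_of_step hC hc hkc hstep hx hy hxy, ⟨C', hstep.valid, hy⟩, ?_⟩
    rw [potential_eq hC hc hkc hx, potential_eq hstep.valid hc hkc hy, hstep.pot_eq]

end FlashCode

theorem exists_flash_code_constant_rate_general
    (n k q : ℕ) (hk : 2 ≤ k) (hn : k < n) :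
    ∃ (D : (Fin n → Fin q) → (Fin k → Bool))
      (E : Fin k → (Fin n → Fin q) → Option (Fin n → Fin q)),
      IsFlashCode D E ∧ Guarantees E ((q - 1) * ((n - k) / Nat.clog 2 k)) := by
  have hc : 0 < Nat.clog 2 k := Nat.clog_pos one_lt_two hk
  have hblocks := Nat.div_mul_le_self (n - k) (Nat.clog 2 k)
  exact ⟨_, FlashCode.exists_isFlashCode_guarantees hc (Nat.le_pow_clog one_lt_two k) (by omega)⟩

/-- For `k ≥ 2`, `q ≥ 2`, `n > k`, there exists an `(n,k)_q` flash code guaranteeing at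
least `t = (q-1)·⌊(n-k)/⌈log₂ k⌉⌋` writes (index group of `n-k` cells split into
`⌊(n-k)/⌈log₂ k⌉⌋` index blocks, parity group of `k` cells, `q-1` phases). -/
theorem exists_flash_code_constant_rate
    (n k q : ℕ) (hk : 2 ≤ k) (hq : 2 ≤ q) (hn : k < n) :
    ∃ (D : (Fin n → Fin q) → (Fin k → Bool))
      (E : Fin k → (Fin n → Fin q) → Option (Fin n → Fin q)),
      IsFlashCode D E ∧ Guarantees E ((q - 1) * ((n - k) / Nat.clog 2 k)) :=
  exists_flash_code_constant_rate_general n k q hk hn
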